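/- Let A be a Noetherian ring complete for the I-adic topology, let (I_d)_{d∈D} be a directed family of open ideals of A consisting of topologically nilpotent elements, and set B := lim_d A/I_d. Suppose B is adic (its topology, with basis Ker(B → A/I_d), equals a J-adic topology for some ideal J ⊆ B). Then the natural map A → B is surjective, and for every d the topology on B equals the (I_d^n B)_{n∈ℕ}-topology. -/

import Mathlib

set_option synthInstance.maxHeartbeats 1000000
set_option maxHeartbeats 1000000

/-- The projective limit `lim_d A ⧸ I d` of the quotients of `A` by a family of
ideals, realized as a subring of the product. -/
def limSubring {A : Type*} [CommRing A] {D : Type*} [Preorder D]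
    (Id : D → Ideal A) : Subring (∀ d, A ⧸ Id d) where
  carrier := {x | ∀ ⦃d e : D⦄, d ≤ e → ∀ hle : Id e ≤ Id d,
    Ideal.Quotient.factor hle (x e) = x d}
  zero_mem' := by intro d e _ hle; simp
  one_mem' := by intro d e _ hle; simp
  add_mem' := by
    intro x y hx hy d e h hle
    simp only [Pi.add_apply, map_add, hx h hle, hy h hle]
  mul_mem' := by
    intro x y hx hy d e h hle
    simp only [Pi.mul_apply, map_mul, hx h hle, hy h hle]
  neg_mem' := by
    intro x hx d e h hle
    simp only [Pi.neg_apply, map_neg, hx h hle]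

/-- The natural ring homomorphism `A → lim_d A ⧸ I d`. -/
def limSubringHom {A : Type*} [CommRing A] {D : Type*} [Preorder D]
    (Id : D → Ideal A) : A →+* limSubring Id :=
  RingHom.codRestrict (Pi.ringHom fun d => Ideal.Quotient.mk (Id d)) _
    (fun a _ _ _ hle => Ideal.Quotient.factor_mk hle a)

/-- The kernel of the projection `lim_d A ⧸ I d → A ⧸ I d`; these ideals form
the basis of open ideals of the limit topology. -/
def limKer {A : Type*} [CommRing A] {D : Type*} [Preorder D]
    (Id : D → Ideal A) (d : D) : Ideal (limSubring Id) :=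
  RingHom.ker ((Pi.evalRingHom (fun d => A ⧸ Id d) d).comp (limSubring Id).subtype)

/-!
Write `φ : A → B` and `Ker_e = Ker (B → A ⧸ I e)`. A power of `I d₀` lies in `Iⁿ` (Noetherianity and
topological nilpotence) and `Ker_{d₀} ⊆ φ(I d₀) B + Ker_e` for all `e`, so some power `J^N` lies in
`φ(Iⁿ) B + Ker_e` for every `e`. Choosing `e` with `Ker_e ⊆ J^{N'}`, every element of `J^N` is the
image of an element of `Iⁿ` up to an error in `J^{N'}`. Iterating, the corrections form an
`I`-adically convergent series in `A`, and since `B` is separated its sum maps to the given element.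
Thus deep powers of `J` lie in `φ(Iⁿ)`, which gives surjectivity and `Ker_e ⊆ φ(I dⁿ) B`; the
reverse inclusion holds because a power of `I d` lies in some `I^m ⊆ I e`.
-/

open Finset

section SuccessiveApproximation

variable {A : Type*} [CommRing A] (I : Ideal A)

lemma sum_Ico_mem_pow {c : ℕ → A} {j : ℕ} (hc : ∀ n, c n ∈ I ^ (j + n)) (m n : ℕ) :
    ∑ k ∈ Ico m n, c k ∈ I ^ (j + m) :=
  Ideal.sum_mem _ fun k hk =>
    Ideal.pow_le_pow_right (Nat.add_le_add_left (mem_Ico.mp hk).1 j) (hc k)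

theorem IsPrecomplete.exists_sub_sum_range_mem_pow [IsPrecomplete I A] {c : ℕ → A} {j : ℕ}
    (hc : ∀ n, c n ∈ I ^ (j + n)) : ∃ a, ∀ n, a - ∑ k ∈ range n, c k ∈ I ^ (j + n) := by
  have hcauchy : ∀ {m n : ℕ}, m ≤ n →
      ∑ k ∈ range m, c k ≡ ∑ k ∈ range n, c k [SMOD (I ^ m • ⊤ : Submodule A A)] := by
    intro m n hmn
    rw [SModEq.sub_mem, smul_eq_mul, Ideal.mul_top, ← neg_sub, neg_mem_iff,
      ← sum_Ico_eq_sub _ hmn]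
    exact Ideal.pow_le_pow_right (Nat.le_add_left m j) (sum_Ico_mem_pow I hc m n)
  obtain ⟨a, ha⟩ := IsPrecomplete.prec ‹_› hcauchy
  refine ⟨a, fun n => ?_⟩
  have hlim : ∑ k ∈ range (j + n), c k - a ∈ I ^ (j + n) := by
    simpa only [SModEq.sub_mem, smul_eq_mul, Ideal.mul_top] using ha (j + n)
  have htail : a - ∑ k ∈ range n, c k
      = ∑ k ∈ Ico n (j + n), c k - (∑ k ∈ range (j + n), c k - a) := by
    rw [sum_Ico_eq_sub _ (Nat.le_add_left n j)]
    abel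
  rw [htail]
  exact sub_mem (sum_Ico_mem_pow I hc n (j + n)) hlim

theorem IsPrecomplete.exists_mem_pow_eq_of_approx [IsPrecomplete I A] {B ι : Type*}
    [AddCommGroup B] (φ : A →+ B) (U : ι → AddSubgroup B) (F : ℕ → Set B)
    (hsep : ∀ x, (∀ i, x ∈ U i) → x = 0)
    (hφ : ∀ i, ∃ n, ∀ a ∈ I ^ n, φ a ∈ U i)
    (hF : ∀ i, ∃ n, ∀ m ≥ n, F m ⊆ U i)
    (happrox : ∀ n, ∀ x ∈ F n, ∃ c ∈ I ^ n, x - φ c ∈ F (n + 1))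
    {j : ℕ} {x : B} (hx : x ∈ F j) : ∃ a ∈ I ^ j, φ a = x := by
  choose! c hcI hcF using happrox
  let xs : ℕ → B := fun n => Nat.rec x (fun n y => y - φ (c (j + n) y)) n
  have hxs : ∀ n, xs n ∈ F (j + n) := fun n => by
    induction n with
    | zero => exact hx
    | succ n ih => exact hcF _ _ ih
  have hsum : ∀ n, φ (∑ k ∈ range n, c (j + k) (xs k)) = x - xs n := fun n => by
    induction n with
    | zero => simp [xs]
    | succ n ih =>
      rw [sum_range_succ, map_add, ih]
      change _ = x - (xs n - φ (c (j + n) (xs n)))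
      abel
  obtain ⟨a, ha⟩ := exists_sub_sum_range_mem_pow I fun n => hcI _ _ (hxs n)
  refine ⟨a, by simpa using ha 0, ?_⟩
  rw [← sub_eq_zero, ← neg_sub, neg_eq_zero]
  refine hsep _ fun i => ?_
  obtain ⟨n₁, hn₁⟩ := hφ i
  obtain ⟨n₂, hn₂⟩ := hF i
  have hsplit : x - φ a = xs (n₁ + n₂) - φ (a - ∑ k ∈ range (n₁ + n₂), c (j + k) (xs k)) := by
    rw [map_sub, hsum]
    abel
  rw [hsplit]
  exact sub_mem (hn₂ _ (by omega) (hxs _)) (hn₁ _ (Ideal.pow_le_pow_right (by omega) (ha _)))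

end SuccessiveApproximation

lemma Ideal.exists_pow_le_pow_of_forall_exists_pow_mem {A : Type*} [CommRing A]
    [IsNoetherianRing A] {I K : Ideal A} (hK : ∀ a ∈ K, ∀ n, ∃ m, a ^ m ∈ I ^ n) (n : ℕ) :
    ∃ k, K ^ k ≤ I ^ n :=
  Ideal.exists_pow_le_of_le_radical_of_fg (fun a ha => Ideal.mem_radical_iff.mpr (hK a ha n))
    (IsNoetherian.noetherian _)

section LimSubring

variable {A : Type*} [CommRing A] {D : Type*} [Preorder D] {Id : D → Ideal A}

lemma mem_limKer_iff {x : limSubring Id} {d : D} :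
    x ∈ limKer Id d ↔ (x : ∀ d, A ⧸ Id d) d = 0 := Iff.rfl

lemma limSubringHom_mem_limKer_iff {a : A} {d : D} :
    limSubringHom Id a ∈ limKer Id d ↔ a ∈ Id d :=
  Ideal.Quotient.eq_zero_iff_mem

lemma eq_zero_of_forall_mem_limKer {x : limSubring Id} (h : ∀ d, x ∈ limKer Id d) : x = 0 :=
  Subtype.ext (funext h)

lemma limKer_antitone (hanti : ∀ ⦃d e : D⦄, d ≤ e → Id e ≤ Id d) : Antitone (limKer Id) := by
  intro d e hde x hx
  rw [mem_limKer_iff] at hx ⊢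
  rw [← x.2 hde (hanti hde), hx, map_zero]

lemma exists_sub_limSubringHom_mem_limKer (x : limSubring Id) (e : D) :
    ∃ a, x - limSubringHom Id a ∈ limKer Id e := by
  obtain ⟨a, ha⟩ := Ideal.Quotient.mk_surjective ((x : ∀ d, A ⧸ Id d) e)
  exact ⟨a, by rw [mem_limKer_iff]; exact sub_eq_zero.mpr ha.symm⟩

/-- The ideal `P B + Ker_e` is the set `φ(P) + Ker_e`, because `φ` is surjective modulo `Ker_e`. -/
lemma exists_mem_sub_limSubringHom_mem_limKer_of_mem_sup {P : Ideal A} {e : D}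
    {x : limSubring Id} (hx : x ∈ P.map (limSubringHom Id) ⊔ limKer Id e) :
    ∃ a ∈ P, x - limSubringHom Id a ∈ limKer Id e := by
  set π := Ideal.Quotient.mk (limKer Id e)
  have hsurj : Function.Surjective (π.comp (limSubringHom Id)) := by
    intro y
    obtain ⟨x, rfl⟩ := Ideal.Quotient.mk_surjective y
    obtain ⟨a, ha⟩ := exists_sub_limSubringHom_mem_limKer x e
    exact ⟨a, (Ideal.Quotient.eq.mpr ha).symm⟩
  have hπx := Ideal.mem_map_of_mem π hx
  rw [Ideal.map_sup, Ideal.map_quotient_self, sup_bot_eq, Ideal.map_map] at hπx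
  obtain ⟨a, haP, ha⟩ := (Ideal.mem_map_iff_of_surjective _ hsurj).mp hπx
  exact ⟨a, haP, Ideal.Quotient.eq.mp ha.symm⟩

lemma limKer_le_map_sup_limKer [IsDirected D (· ≤ ·)]
    (hanti : ∀ ⦃d e : D⦄, d ≤ e → Id e ≤ Id d) (d e : D) :
    limKer Id d ≤ (Id d).map (limSubringHom Id) ⊔ limKer Id e := by
  intro x hx
  obtain ⟨f, hdf, hef⟩ := directed_of (· ≤ ·) d e
  obtain ⟨a, ha⟩ := exists_sub_limSubringHom_mem_limKer x f
  have haId : a ∈ Id d := limSubringHom_mem_limKer_iff.mp <| by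
    simpa using sub_mem hx (limKer_antitone hanti hdf ha)
  rw [← add_sub_cancel (limSubringHom Id a) x]
  exact Submodule.add_mem_sup (Ideal.mem_map_of_mem _ haId) (limKer_antitone hanti hef ha)

variable [IsNoetherianRing A] [IsDirected D (· ≤ ·)] {I : Ideal A}
  (hanti : ∀ ⦃d e : D⦄, d ≤ e → Id e ≤ Id d)
  (hnil : ∀ d, ∀ a ∈ Id d, ∀ n : ℕ, ∃ m : ℕ, a ^ m ∈ I ^ n)
include hanti hnil

lemma exists_pow_le_map_pow_sup_limKer {J : Ideal (limSubring Id)}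
    (hJ : ∀ d, ∃ p : ℕ, J ^ p ≤ limKer Id d) (d₀ : D) (n : ℕ) :
    ∃ N ≥ n, ∀ e, J ^ N ≤ (I ^ n).map (limSubringHom Id) ⊔ limKer Id e := by
  obtain ⟨p, hp⟩ := hJ d₀
  obtain ⟨k, hk⟩ := Ideal.exists_pow_le_pow_of_forall_exists_pow_mem (hnil d₀) n
  refine ⟨max (p * (k + 1)) n, le_max_right _ _, fun e => ?_⟩
  calc J ^ max (p * (k + 1)) n
      ≤ (J ^ p) ^ (k + 1) := by rw [← pow_mul]; exact Ideal.pow_le_pow_right (le_max_left _ _)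
    _ ≤ ((Id d₀).map (limSubringHom Id) ⊔ limKer Id e) ^ (k + 1) :=
        Ideal.pow_right_mono (hp.trans (limKer_le_map_sup_limKer hanti d₀ e)) _
    _ ≤ (Id d₀).map (limSubringHom Id) ^ k ⊔ limKer Id e := by
        simpa only [pow_one] using
          Ideal.sup_pow_add_le_pow_sup_pow (I := (Id d₀).map (limSubringHom Id))
            (J := limKer Id e) (n := k) (m := 1)
    _ ≤ (I ^ n).map (limSubringHom Id) ⊔ limKer Id e := by
        rw [← Ideal.map_pow]
        exact sup_le_sup_right (Ideal.map_mono hk) _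

theorem exists_limSubringHom_eq_of_mem_limKer [IsPrecomplete I A]
    (hopen : ∀ d, ∃ m : ℕ, I ^ m ≤ Id d) {J : Ideal (limSubring Id)}
    (hJ₁ : ∀ p : ℕ, ∃ d, limKer Id d ≤ J ^ p) (hJ₂ : ∀ d, ∃ p : ℕ, J ^ p ≤ limKer Id d)
    (n : ℕ) : ∃ e, ∀ x ∈ limKer Id e, ∃ a ∈ I ^ n, limSubringHom Id a = x := by
  obtain ⟨d₀, -⟩ := hJ₁ 0
  choose N hNge hN using exists_pow_le_map_pow_sup_limKer hanti hnil hJ₂ d₀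
  obtain ⟨e, he⟩ := hJ₁ (N n)
  refine ⟨e, fun x hx => IsPrecomplete.exists_mem_pow_eq_of_approx I
    (limSubringHom Id).toAddMonoidHom (fun d => (limKer Id d).toAddSubgroup)
    (fun m => (J ^ N m : Ideal (limSubring Id))) (fun _ => eq_zero_of_forall_mem_limKer)
    ?_ ?_ ?_ (he hx)⟩
  · intro d
    obtain ⟨m, hm⟩ := hopen d
    exact ⟨m, fun a ha => limSubringHom_mem_limKer_iff.mpr (hm ha)⟩
  · intro d
    obtain ⟨p, hp⟩ := hJ₂ d
    exact ⟨p, fun m hm => (Ideal.pow_le_pow_right (hm.trans (hNge m))).trans hp⟩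
  · intro m x hx
    obtain ⟨e, he⟩ := hJ₁ (N (m + 1))
    obtain ⟨c, hc, hxc⟩ := exists_mem_sub_limSubringHom_mem_limKer_of_mem_sup (hN m e hx)
    exact ⟨c, hc, he hxc⟩

end LimSubring

/-- Let `A` be a Noetherian ring, complete for the `I`-adic topology, and
`(I d)_{d ∈ D}` a directed family of open ideals of `A` consisting of
topologically nilpotent elements.  Set `B := lim_d A ⧸ I d`.  Suppose `B` is
adic: its topology, with basis `Ker (B → A ⧸ I d)`, equals a `J`-adic topology
for some ideal `J ⊆ B`.  Then the natural map `A → B` is surjective, and for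
every `d` the topology on `B` equals the `(I dⁿ B)ₙ`-topology. -/
theorem stmt_11 {A : Type*} [CommRing A] [IsNoetherianRing A]
    (I : Ideal A) [IsAdicComplete I A]
    {D : Type*} [Preorder D] [IsDirected D (· ≤ ·)]
    (Id : D → Ideal A) (hanti : ∀ ⦃d e : D⦄, d ≤ e → Id e ≤ Id d)
    (hopen : ∀ d, ∃ m : ℕ, I ^ m ≤ Id d)
    (hnil : ∀ d, ∀ a ∈ Id d, ∀ n : ℕ, ∃ m : ℕ, a ^ m ∈ I ^ n)
    (hadic : ∃ J : Ideal (limSubring Id),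
      (∀ p : ℕ, ∃ d, limKer Id d ≤ J ^ p) ∧ (∀ d, ∃ p : ℕ, J ^ p ≤ limKer Id d)) :
    Function.Surjective (limSubringHom Id) ∧
    ∀ d, (∀ n : ℕ, ∃ e, limKer Id e ≤ Ideal.map (limSubringHom Id) (Id d ^ n)) ∧
      (∀ e, ∃ n : ℕ, Ideal.map (limSubringHom Id) (Id d ^ n) ≤ limKer Id e) := by
  obtain ⟨J, hJ₁, hJ₂⟩ := hadic
  have hlift := exists_limSubringHom_eq_of_mem_limKer hanti hnil hopen hJ₁ hJ₂
  refine ⟨fun x => ?_, fun d => ⟨fun n => ?_, fun e => ?_⟩⟩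
  · obtain ⟨e, he⟩ := hlift 0
    obtain ⟨a₀, ha₀⟩ := exists_sub_limSubringHom_mem_limKer x e
    obtain ⟨a₁, -, ha₁⟩ := he _ ha₀
    exact ⟨a₀ + a₁, by rw [map_add, ha₁, add_sub_cancel]⟩
  · obtain ⟨m, hm⟩ := hopen d
    obtain ⟨e, he⟩ := hlift (m * n)
    refine ⟨e, fun x hx => ?_⟩
    obtain ⟨a, ha, rfl⟩ := he x hx
    exact Ideal.mem_map_of_mem _ (Ideal.pow_right_mono hm n (pow_mul I m n ▸ ha))
  · obtain ⟨m, hm⟩ := hopen e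
    obtain ⟨k, hk⟩ := Ideal.exists_pow_le_pow_of_forall_exists_pow_mem (hnil d) m
    exact ⟨k, Ideal.map_le_iff_le_comap.mpr fun a ha =>
      limSubringHom_mem_limKer_iff.mpr (hm (hk ha))⟩
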